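/- Let ℓ ≥ 2 and k ≥ 3, and let i be a position with i ≠ 0. The graph obtained from ST^ℓ_k by deleting all vertices of Σ_i and all edges of E_i has exactly k · C(kℓ−2, ℓ−1) connected components (where C denotes the binomial coefficient), each component being a copy of ST^ℓ_{k−1}. -/

import Mathlib

/-- An ℓ-set permutation: a string of length `k * l` over the alphabet `Fin k`
in which every symbol occurs exactly `l` times. -/
abbrev LSetPerm (k l : ℕ) : Type :=
  {v : Fin (k * l) → Fin k // ∀ j : Fin k, (Finset.univ.filter fun x => v x = j).card = l}

/-- The star ℓ-set transposition graph `ST^ℓ_k`: vertices are the ℓ-set permutations,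
with `v` adjacent to `w` iff `w` is obtained from `v` by transposing the first entry
with an entry of differing value. -/
def STGraph (k l : ℕ) [NeZero (k * l)] : SimpleGraph (LSetPerm k l) :=
  SimpleGraph.fromRel fun v w =>
    ∃ h : Fin (k * l), h ≠ 0 ∧ v.1 h ≠ v.1 0 ∧ w.1 = v.1 ∘ (Equiv.swap 0 h)

namespace ST15

open Finset

variable {k l : ℕ}

def canonF (k l : ℕ) : Fin (k * l) → Fin k := fun x => (finProdFinEquiv.symm x).1

lemma canonF_count (j : Fin k) : (univ.filter fun x => canonF k l x = j).card = l := by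
  have h1 : (univ.filter fun p : Fin k × Fin l => p.1 = j).card
      = (univ.filter fun x => canonF k l x = j).card := by
    apply Finset.card_equiv finProdFinEquiv
    intro p
    simp only [mem_filter, mem_univ, true_and, canonF, Equiv.symm_apply_apply]
    change p.1 = j ↔ finProdFinEquiv p ∈ (univ.filter fun x => canonF k l x = j)
    rw [Finset.mem_filter_univ]
    simp only [canonF, Equiv.symm_apply_apply]
  rw [← h1]
  have h2 : (univ.filter fun p : Fin k × Fin l => p.1 = j) = {j} ×ˢ univ := by
    ext p
    simp only [mem_filter, mem_univ, true_and, Finset.mem_product, mem_singleton, and_true]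
  rw [h2]; simp

def canonPerm (k l : ℕ) : LSetPerm k l := ⟨canonF k l, fun j => canonF_count j⟩

lemma count_comp_equiv (v : Fin (k*l) → Fin k) (e : Equiv.Perm (Fin (k*l))) (j : Fin k) :
    (univ.filter fun x => (v ∘ e) x = j).card = (univ.filter fun x => v x = j).card := by
  apply Finset.card_equiv e; intro x; simp

def moved [NeZero (k*l)] (v : LSetPerm k l) (h : Fin (k*l)) : LSetPerm k l :=
  ⟨v.1 ∘ Equiv.swap 0 h, fun j => (count_comp_equiv v.1 _ j).trans (v.2 j)⟩

lemma moved_def [NeZero (k*l)] (v : LSetPerm k l) (h : Fin (k*l)) :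
    (moved v h).1 = v.1 ∘ Equiv.swap 0 h := rfl

lemma moved_apply [NeZero (k*l)] (v : LSetPerm k l) (h x : Fin (k*l)) :
    (moved v h).1 x = v.1 (Equiv.swap 0 h x) := rfl

lemma STGraph_adj_iff [NeZero (k*l)] {v w : LSetPerm k l} :
    (STGraph k l).Adj v w ↔
      ∃ h : Fin (k*l), h ≠ 0 ∧ v.1 h ≠ v.1 0 ∧ w.1 = v.1 ∘ Equiv.swap 0 h := by
  constructor
  · rw [STGraph, SimpleGraph.fromRel_adj]
    rintro ⟨hne, (⟨h, h0, hv, hw⟩ | ⟨h, h0, hw0, hv⟩)⟩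
    · exact ⟨h, h0, hv, hw⟩
    · refine ⟨h, h0, ?_, ?_⟩
      · have h1 : v.1 h = w.1 0 := by
          rw [hv]; simp
        have h2 : v.1 0 = w.1 h := by
          rw [hv]; simp
        rw [h1, h2]; exact fun e => hw0 e.symm
      · funext x
        calc w.1 x = w.1 (Equiv.swap 0 h (Equiv.swap 0 h x)) := by
              rw [Equiv.swap_apply_self]
          _ = v.1 (Equiv.swap 0 h x) := by rw [hv]; rfl
  · rintro ⟨h, h0, hv, hw⟩
    rw [STGraph, SimpleGraph.fromRel_adj]
    refine ⟨?_, Or.inl ⟨h, h0, hv, hw⟩⟩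
    intro he
    apply hv
    have h1 : w.1 0 = v.1 h := by rw [hw]; simp
    rw [← he] at h1
    exact h1.symm

def mism [NeZero (k*l)] (v c : LSetPerm k l) : ℕ :=
  (univ.filter fun x : Fin (k*l) => x ≠ 0 ∧ v.1 x ≠ c.1 x).card

lemma exists_target [NeZero (k*l)] (v c : LSetPerm k l) (h : v.1 0 ≠ c.1 0) :
    ∃ h', c.1 h' = v.1 0 ∧ v.1 h' ≠ v.1 0 := by
  by_contra hc
  push_neg at hc
  have hsub : (univ.filter fun x => c.1 x = v.1 0) ⊆ (univ.filter fun x => v.1 x = v.1 0) := by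
    intro y hy; simp only [mem_filter, mem_univ, true_and] at hy ⊢
    exact hc y hy
  have heq := Finset.eq_of_subset_of_card_le hsub (le_of_eq (by rw [v.2, c.2]))
  have h0 : (0 : Fin (k*l)) ∈ (univ.filter fun x => v.1 x = v.1 0) := by simp
  rw [← heq] at h0
  simp only [mem_filter, mem_univ, true_and] at h0
  exact h h0.symm

lemma exists_mismatch_ne [NeZero (k*l)] (v c : LSetPerm k l) (hne : v.1 ≠ c.1)
    (h0 : v.1 0 = c.1 0) : ∃ x, v.1 x ≠ c.1 x ∧ v.1 x ≠ v.1 0 := by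
  by_contra hc
  push_neg at hc
  apply hne
  funext x
  by_contra hx
  have hvx := hc x hx
  have hsub : (univ.filter fun y => c.1 y = v.1 0) ⊆ (univ.filter fun y => v.1 y = v.1 0) := by
    intro y hy; simp only [mem_filter, mem_univ, true_and] at hy ⊢
    by_cases hvy : v.1 y = c.1 y
    · rw [hvy, hy]
    · exact hc y hvy
  have heq := Finset.eq_of_subset_of_card_le hsub (le_of_eq (by rw [v.2, c.2]))
  have hxB : x ∈ (univ.filter fun y => v.1 y = v.1 0) := by
    simp only [mem_filter, mem_univ, true_and]; exact hvx
  rw [← heq] at hxB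
  simp only [mem_filter, mem_univ, true_and] at hxB
  exact hx (hvx.trans hxB.symm)

lemma eq_of_nonzero_eq [NeZero (k*l)] (v c : LSetPerm k l)
    (h : ∀ x, x ≠ 0 → v.1 x = c.1 x) : v = c := by
  have h0 : v.1 0 = c.1 0 := by
    by_contra hne
    have hsub : (univ.filter fun y => v.1 y = c.1 0) ⊆ (univ.filter fun y => c.1 y = c.1 0) := by
      intro y hy; simp only [mem_filter, mem_univ, true_and] at hy ⊢
      rcases eq_or_ne y 0 with rfl | hy0
      · exact absurd hy hne
      · rw [← h y hy0]; exact hy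
    have heq := Finset.eq_of_subset_of_card_le hsub (le_of_eq (by rw [v.2, c.2]))
    have h00 : (0 : Fin (k*l)) ∈ (univ.filter fun y => c.1 y = c.1 0) := by simp
    rw [← heq] at h00
    simp only [mem_filter, mem_univ, true_and] at h00
    exact hne h00
  apply Subtype.ext
  funext x
  rcases eq_or_ne x 0 with rfl | hx
  · exact h0
  · exact h x hx

lemma step1 [NeZero (k*l)] (v c : LSetPerm k l) (h : v.1 0 ≠ c.1 0) :
    ∃ w, (STGraph k l).Adj v w ∧ mism w c < mism v c := by
  obtain ⟨h', hc, hv⟩ := exists_target v c h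
  have h'0 : h' ≠ 0 := by rintro rfl; exact h hc.symm
  refine ⟨moved v h', STGraph_adj_iff.2 ⟨h', h'0, hv, moved_def v h'⟩, ?_⟩
  have key : (univ.filter fun x : Fin (k*l) => x ≠ 0 ∧ (moved v h').1 x ≠ c.1 x)
      = (univ.filter fun x : Fin (k*l) => x ≠ 0 ∧ v.1 x ≠ c.1 x).erase h' := by
    ext x
    simp only [mem_erase, mem_filter, mem_univ, true_and]
    rcases eq_or_ne x h' with rfl | hxh
    · simp only [ne_eq, not_true_eq_false, false_and, iff_false, not_and]
      intro _
      have : (moved v x).1 x = c.1 x := by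
        rw [moved_apply, Equiv.swap_apply_right, hc]
      simp [this]
    · constructor
      · rintro ⟨hx0, hx⟩
        refine ⟨hxh, hx0, ?_⟩
        have : (moved v h').1 x = v.1 x := by
          rw [moved_apply, Equiv.swap_apply_of_ne_of_ne hx0 hxh]
        rwa [this] at hx
      · rintro ⟨-, hx0, hx⟩
        refine ⟨hx0, ?_⟩
        have : (moved v h').1 x = v.1 x := by
          rw [moved_apply, Equiv.swap_apply_of_ne_of_ne hx0 hxh]
        rwa [this]
  have hmem : h' ∈ (univ.filter fun x : Fin (k*l) => x ≠ 0 ∧ v.1 x ≠ c.1 x) := by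
    simp only [mem_filter, mem_univ, true_and]
    exact ⟨h'0, by rw [hc]; exact hv⟩
  unfold mism
  rw [key]
  exact Finset.card_erase_lt_of_mem hmem

lemma step2 [NeZero (k*l)] (v c : LSetPerm k l) (h0 : v.1 0 = c.1 0) (hne : v.1 ≠ c.1) :
    ∃ w, (STGraph k l).Adj v w ∧ mism w c ≤ mism v c ∧ w.1 0 ≠ c.1 0 := by
  obtain ⟨x, hx, hxv⟩ := exists_mismatch_ne v c hne h0
  have hx0 : x ≠ 0 := by rintro rfl; exact hxv rfl
  refine ⟨moved v x, STGraph_adj_iff.2 ⟨x, hx0, hxv, moved_def v x⟩, ?_, ?_⟩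
  · apply Finset.card_le_card
    intro y hy
    simp only [mem_filter, mem_univ, true_and] at hy ⊢
    obtain ⟨hy0, hy1⟩ := hy
    refine ⟨hy0, ?_⟩
    rcases eq_or_ne y x with rfl | hyx
    · exact hx
    · have : (moved v x).1 y = v.1 y := by
        show v.1 (Equiv.swap 0 x y) = v.1 y
        rw [Equiv.swap_apply_of_ne_of_ne hy0 hyx]
      rwa [this] at hy1
  · rw [moved_apply, Equiv.swap_apply_left, ← h0]
    exact hxv

theorem STGraph_preconnected [NeZero (k*l)] : (STGraph k l).Preconnected := by
  have main : ∀ v, (STGraph k l).Reachable v (canonPerm k l) := by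
    have H : ∀ n (v : LSetPerm k l), mism v (canonPerm k l) ≤ n →
        (STGraph k l).Reachable v (canonPerm k l) := by
      intro n
      induction n with
      | zero =>
        intro v hv
        have hv0 : mism v (canonPerm k l) = 0 := Nat.le_zero.mp hv
        have : v = canonPerm k l := by
          apply eq_of_nonzero_eq
          intro x hx
          by_contra hvx
          have : x ∈ (univ.filter fun x : Fin (k*l) =>
              x ≠ 0 ∧ v.1 x ≠ (canonPerm k l).1 x) := by
            simp only [mem_filter, mem_univ, true_and]; exact ⟨hx, hvx⟩
          rw [Finset.card_eq_zero.mp hv0] at this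
          exact absurd this (Finset.notMem_empty x)
        exact this ▸ SimpleGraph.Reachable.refl _
      | succ n ih =>
        intro v hv
        by_cases hvc : v = canonPerm k l
        · exact hvc ▸ SimpleGraph.Reachable.refl _
        have hvc' : v.1 ≠ (canonPerm k l).1 := fun h => hvc (Subtype.ext h)
        by_cases h0 : v.1 0 = (canonPerm k l).1 0
        · obtain ⟨w, hadj, hle, hw0⟩ := step2 v (canonPerm k l) h0 hvc'
          obtain ⟨w', hadj', hlt⟩ := step1 w (canonPerm k l) hw0
          have : mism w' (canonPerm k l) ≤ n := by omega
          exact (hadj.toWalk.reachable).trans ((hadj'.toWalk.reachable).trans (ih w' this))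
        · obtain ⟨w, hadj, hlt⟩ := step1 v (canonPerm k l) h0
          have : mism w (canonPerm k l) ≤ n := by omega
          exact (hadj.toWalk.reachable).trans (ih w this)
    intro v
    exact H (mism v (canonPerm k l)) v le_rfl
  intro u v
  exact (main u).trans (main v).symm

section Main

variable (k l : ℕ) [NeZero (k * l)]

def Eset (i : Fin (k*l)) : Set (Sym2 (LSetPerm k l)) :=
  {e | ∃ v w : LSetPerm k l, e = s(v, w) ∧ v.1 i ≠ v.1 0 ∧ w.1 = v.1 ∘ Equiv.swap 0 i}

def S0 (i : Fin (k*l)) : Set (LSetPerm k l) := {v | v.1 i ≠ v.1 0}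

def Gr (i : Fin (k*l)) : SimpleGraph ↥(S0 k l i) :=
  ((STGraph k l).deleteEdges (Eset k l i)).induce (S0 k l i)

variable {k l}

lemma mem_S0 {i : Fin (k*l)} (v : ↥(S0 k l i)) : v.1.1 i ≠ v.1.1 0 := v.2

lemma Gr_adj_iff {i : Fin (k*l)} (hi : i ≠ 0) {a b : ↥(S0 k l i)} :
    (Gr k l i).Adj a b ↔ ∃ h : Fin (k*l), h ≠ 0 ∧ h ≠ i ∧ a.1.1 h ≠ a.1.1 0 ∧
      b.1.1 = a.1.1 ∘ Equiv.swap 0 h := by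
  have hGr : (Gr k l i).Adj a b ↔
      (STGraph k l).Adj a.1 b.1 ∧ s(a.1, b.1) ∉ Eset k l i := by
    rw [Gr, SimpleGraph.induce]
    rw [SimpleGraph.comap_adj, SimpleGraph.deleteEdges_adj]
    exact Iff.rfl
  rw [hGr, STGraph_adj_iff]
  constructor
  · rintro ⟨⟨h, h0, hne, hw⟩, hnot⟩
    refine ⟨h, h0, ?_, hne, hw⟩
    rintro rfl
    exact hnot ⟨a.1, b.1, rfl, mem_S0 a, hw⟩
  · rintro ⟨h, h0, hne_i, hne, hw⟩
    refine ⟨⟨h, h0, hne, hw⟩, ?_⟩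
    rintro ⟨p, q, hpq, hp, hq⟩
    rw [Sym2.eq_iff] at hpq
    have hii : a.1.1 (Equiv.swap 0 h i) = a.1.1 i := by
      rw [Equiv.swap_apply_of_ne_of_ne hi (Ne.symm hne_i)]
    rcases hpq with ⟨hap, hbq⟩ | ⟨haq, hbp⟩
    · -- b = a ∘ swap 0 i, so b i = a 0; but also b i = a i
      have hap1 : a.1.1 = p.1 := congrArg Subtype.val hap
      have hbq1 : b.1.1 = q.1 := congrArg Subtype.val hbq
      have h1 : b.1.1 i = a.1.1 0 := by
        rw [hbq1, hq, hap1]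
        show p.1 (Equiv.swap 0 i i) = p.1 0
        rw [Equiv.swap_apply_right]
      have h2 : b.1.1 i = a.1.1 i := by rw [hw]; exact hii
      exact mem_S0 a (h2.symm.trans h1)
    · -- a = b ∘ swap 0 i
      have haq1 : a.1.1 = q.1 := congrArg Subtype.val haq
      have hbp1 : b.1.1 = p.1 := congrArg Subtype.val hbp
      have hq' : a.1.1 = b.1.1 ∘ Equiv.swap 0 i := by rw [haq1, hq, hbp1]
      have h1 : a.1.1 i = b.1.1 0 := by
        rw [hq']
        show b.1.1 (Equiv.swap 0 i i) = b.1.1 0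
        rw [Equiv.swap_apply_right]
      have h2 : b.1.1 0 = a.1.1 h := by
        rw [hw]
        show a.1.1 (Equiv.swap 0 h 0) = a.1.1 h
        rw [Equiv.swap_apply_left]
      have h3 : a.1.1 0 = b.1.1 i := by
        rw [hq']
        show b.1.1 (Equiv.swap 0 i 0) = b.1.1 i
        rw [Equiv.swap_apply_left]
      have h4 : b.1.1 i = a.1.1 i := by rw [hw]; exact hii
      exact mem_S0 a ((h3.trans h4).symm)

lemma Gr_adj_invar {i : Fin (k*l)} (hi : i ≠ 0) {a b : ↥(S0 k l i)}
    (hab : (Gr k l i).Adj a b) :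
    b.1.1 i = a.1.1 i ∧ ∀ x, (b.1.1 x = a.1.1 i ↔ a.1.1 x = a.1.1 i) := by
  obtain ⟨h, h0, hne_i, hne, hw⟩ := (Gr_adj_iff hi).1 hab
  have hbi : b.1.1 i = a.1.1 i := by
    rw [hw]
    show a.1.1 (Equiv.swap 0 h i) = a.1.1 i
    rw [Equiv.swap_apply_of_ne_of_ne hi (Ne.symm hne_i)]
  refine ⟨hbi, fun x => ?_⟩
  have hb0 : b.1.1 0 = a.1.1 h := by
    rw [hw]; show a.1.1 (Equiv.swap 0 h 0) = a.1.1 h; rw [Equiv.swap_apply_left]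
  have hbh : b.1.1 h = a.1.1 0 := by
    rw [hw]; show a.1.1 (Equiv.swap 0 h h) = a.1.1 0; rw [Equiv.swap_apply_right]
  have ha0 : a.1.1 0 ≠ a.1.1 i := fun e => mem_S0 a e.symm
  have hah : a.1.1 h ≠ a.1.1 i := by
    intro e
    apply mem_S0 b
    rw [hbi, hb0, e]
  rcases eq_or_ne x 0 with rfl | hx0
  · rw [hb0]
    exact ⟨fun e => absurd e hah, fun e => absurd e ha0⟩
  rcases eq_or_ne x h with rfl | hxh
  · rw [hbh]
    exact ⟨fun e => absurd e ha0, fun e => absurd e hah⟩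
  · rw [hw]
    show a.1.1 (Equiv.swap 0 h x) = a.1.1 i ↔ _
    rw [Equiv.swap_apply_of_ne_of_ne hx0 hxh]

def Idx (k l : ℕ) [NeZero (k*l)] (i : Fin (k*l)) : Type :=
  Fin k × {S : Finset (Fin (k*l)) // S.card = l ∧ i ∈ S ∧ (0 : Fin (k*l)) ∉ S}

def idx {i : Fin (k*l)} (a : ↥(S0 k l i)) : Idx k l i :=
  ⟨a.1.1 i, ⟨Finset.univ.filter fun x => a.1.1 x = a.1.1 i, a.1.2 _, by simp,
    by simp only [mem_filter, mem_univ, true_and]; exact fun e => mem_S0 a e.symm⟩⟩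

lemma idx_adj {i : Fin (k*l)} (hi : i ≠ 0) {a b : ↥(S0 k l i)}
    (hab : (Gr k l i).Adj a b) : idx b = idx a := by
  obtain ⟨h1, h2⟩ := Gr_adj_invar hi hab
  unfold idx
  refine Prod.ext h1 (Subtype.ext ?_)
  ext x
  simp only [mem_filter, mem_univ, true_and]
  rw [h1]
  exact h2 x

lemma idx_reachable {i : Fin (k*l)} (hi : i ≠ 0) {a b : ↥(S0 k l i)}
    (hab : (Gr k l i).Reachable a b) : idx b = idx a := by
  obtain ⟨p⟩ := hab
  induction p with
  | nil => rfl
  | cons h p ih => rw [ih, idx_adj hi h]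

end Main

section Psi

variable {k l : ℕ} [NeZero (k * l)] [NeZero ((k - 1) * l)]

lemma card_filter_transfer {N n : ℕ} (T : Finset (Fin N)) (e : Fin n ≃ ↥T)
    (p : Fin N → Prop) [DecidablePred p] (hp : ∀ x, p x → x ∈ T) :
    (univ.filter fun y => p ((e y) : Fin N)).card = (univ.filter p).card := by
  refine Finset.card_bij' (fun y _ => ((e y) : Fin N))
    (fun x hx => e.symm ⟨x, hp x (by simpa using hx)⟩) ?_ ?_ ?_ ?_
  · intro y hy
    simp only [mem_filter, mem_univ, true_and] at hy ⊢
    exact hy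
  · intro x hx
    simp only [mem_filter, mem_univ, true_and, Equiv.apply_symm_apply] at hx ⊢
    exact hx
  · intro y _; simp
  · intro x _; simp

lemma compl_card_S {S : Finset (Fin (k*l))} (hS : S.card = l) : Sᶜ.card = (k-1)*l := by
  rw [Finset.card_compl, hS, Fintype.card_fin, Nat.sub_one_mul]

def posE {S : Finset (Fin (k*l))} (hS : S.card = l) : Fin ((k-1)*l) ≃o ↥(Sᶜ) :=
  Sᶜ.orderIsoOfFin (compl_card_S hS)

lemma valE_card (j₀ : Fin k) : ({j₀}ᶜ : Finset (Fin k)).card = k - 1 := by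
  rw [Finset.card_compl, Finset.card_singleton, Fintype.card_fin]

def valE (j₀ : Fin k) : Fin (k-1) ≃o ↥({j₀}ᶜ : Finset (Fin k)) :=
  Finset.orderIsoOfFin ({j₀}ᶜ : Finset (Fin k)) (valE_card j₀)

lemma valE_ne (j₀ : Fin k) (m : Fin (k-1)) : ((valE j₀ m) : Fin k) ≠ j₀ := by
  have h := (valE j₀ m).2
  rw [Finset.mem_compl, Finset.mem_singleton] at h
  exact h

lemma valE_inj {j₀ : Fin k} {m m' : Fin (k-1)}
    (h : ((valE j₀ m) : Fin k) = ((valE j₀ m') : Fin k)) : m = m' :=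
  (valE j₀).injective (Subtype.ext h)

lemma posE_zero {S : Finset (Fin (k*l))} (hS : S.card = l) (h0S : (0:Fin (k*l)) ∉ S) :
    posE hS 0 = ⟨0, Finset.mem_compl.2 h0S⟩ := by
  apply Subtype.ext
  have h1 : posE hS 0 ≤ ⟨0, Finset.mem_compl.2 h0S⟩ := by
    have h2 : (⟨0, Finset.mem_compl.2 h0S⟩ : ↥(Sᶜ))
        = posE hS ((posE hS).symm ⟨0, Finset.mem_compl.2 h0S⟩) := by
      rw [OrderIso.apply_symm_apply]
    rw [h2]
    exact (posE hS).monotone (Fin.zero_le _)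
  have h3 : ((posE hS 0 : ↥(Sᶜ)) : Fin (k*l)) ≤ (0 : Fin (k*l)) := h1
  exact le_antisymm h3 (Fin.zero_le _)

def psiF (j₀ : Fin k) {S : Finset (Fin (k*l))} (hS : S.card = l)
    (u : Fin ((k-1)*l) → Fin (k-1)) : Fin (k*l) → Fin k :=
  fun x => if hx : x ∈ S then j₀
    else ((valE j₀ (u ((posE hS).symm ⟨x, Finset.mem_compl.2 hx⟩))) : Fin k)

lemma psiF_mem (j₀ : Fin k) {S : Finset (Fin (k*l))} (hS : S.card = l)
    (u : Fin ((k-1)*l) → Fin (k-1)) {x : Fin (k*l)} (hx : x ∈ S) :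
    psiF j₀ hS u x = j₀ := dif_pos hx

lemma psiF_not_mem (j₀ : Fin k) {S : Finset (Fin (k*l))} (hS : S.card = l)
    (u : Fin ((k-1)*l) → Fin (k-1)) {x : Fin (k*l)} (hx : x ∉ S) :
    psiF j₀ hS u x
      = ((valE j₀ (u ((posE hS).symm ⟨x, Finset.mem_compl.2 hx⟩))) : Fin k) := dif_neg hx

lemma psiF_posE (j₀ : Fin k) {S : Finset (Fin (k*l))} (hS : S.card = l)
    (u : Fin ((k-1)*l) → Fin (k-1)) (y : Fin ((k-1)*l)) :
    psiF j₀ hS u ((posE hS y : ↥(Sᶜ)) : Fin (k*l)) = ((valE j₀ (u y)) : Fin k) := by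
  have hx : ((posE hS y : ↥(Sᶜ)) : Fin (k*l)) ∉ S := Finset.mem_compl.1 (posE hS y).2
  rw [psiF_not_mem j₀ hS u hx]
  congr 2
  have h1 : (⟨((posE hS y : ↥(Sᶜ)) : Fin (k*l)), Finset.mem_compl.2 hx⟩ : ↥(Sᶜ))
      = posE hS y := Subtype.ext rfl
  rw [h1, OrderIso.symm_apply_apply]

lemma psiF_zero (j₀ : Fin k) {S : Finset (Fin (k*l))} (hS : S.card = l)
    (h0S : (0:Fin (k*l)) ∉ S) (u : Fin ((k-1)*l) → Fin (k-1)) :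
    psiF j₀ hS u 0 = ((valE j₀ (u 0)) : Fin k) := by
  have h : ((posE hS 0 : ↥(Sᶜ)) : Fin (k*l)) = 0 := by rw [posE_zero hS h0S]
  rw [← h, psiF_posE]

lemma psiF_filter_j0 (j₀ : Fin k) {S : Finset (Fin (k*l))} (hS : S.card = l)
    (u : Fin ((k-1)*l) → Fin (k-1)) :
    (univ.filter fun x => psiF j₀ hS u x = j₀) = S := by
  ext x
  simp only [mem_filter, mem_univ, true_and]
  by_cases hx : x ∈ S
  · simp [psiF_mem j₀ hS u hx, hx]
  · simp [psiF_not_mem j₀ hS u hx, hx, valE_ne]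

lemma psiF_count (j₀ : Fin k) {S : Finset (Fin (k*l))} (hS : S.card = l)
    (u : LSetPerm (k-1) l) (j : Fin k) :
    (univ.filter fun x => psiF j₀ hS u.1 x = j).card = l := by
  rcases eq_or_ne j j₀ with rfl | hj
  · rw [psiF_filter_j0]; exact hS
  · have hjc : j ∈ ({j₀}ᶜ : Finset (Fin k)) :=
      Finset.mem_compl.2 (fun h => hj (Finset.mem_singleton.1 h))
    set jc : Fin (k-1) := (valE j₀).symm ⟨j, hjc⟩ with hjcdef
    have hp : ∀ x, psiF j₀ hS u.1 x = j → x ∈ Sᶜ := by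
      intro x hx
      rw [Finset.mem_compl]
      intro hxS
      rw [psiF_mem j₀ hS u.1 hxS] at hx
      exact hj hx.symm
    have h2 : (univ.filter fun y =>
        psiF j₀ hS u.1 (((posE hS).toEquiv y : ↥(Sᶜ)) : Fin (k*l)) = j).card = l := by
      have h1 : (univ.filter fun y =>
          psiF j₀ hS u.1 (((posE hS).toEquiv y : ↥(Sᶜ)) : Fin (k*l)) = j)
          = (univ.filter fun y => u.1 y = jc) := by
        ext y
        simp only [mem_filter, mem_univ, true_and]
        rw [show (((posE hS).toEquiv y : ↥(Sᶜ)) : Fin (k*l))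
          = ((posE hS y : ↥(Sᶜ)) : Fin (k*l)) from rfl, psiF_posE]
        constructor
        · intro e
          have h3 : (⟨j, hjc⟩ : ↥({j₀}ᶜ : Finset (Fin k))) = valE j₀ (u.1 y) :=
            Subtype.ext e.symm
          rw [hjcdef, h3, OrderIso.symm_apply_apply]
        · intro e
          rw [e, hjcdef, OrderIso.apply_symm_apply]
      rw [h1]; exact u.2 jc
    exact (card_filter_transfer Sᶜ (posE hS).toEquiv
      (fun x => psiF j₀ hS u.1 x = j) hp).symm.trans h2

def psiP (j₀ : Fin k) {S : Finset (Fin (k*l))} (hS : S.card = l)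
    (u : LSetPerm (k-1) l) : LSetPerm k l :=
  ⟨psiF j₀ hS u.1, psiF_count j₀ hS u⟩

lemma psiF_inj (j₀ : Fin k) {S : Finset (Fin (k*l))} (hS : S.card = l)
    {u u' : Fin ((k-1)*l) → Fin (k-1)} (h : psiF j₀ hS u = psiF j₀ hS u') : u = u' := by
  funext y
  have h1 := congrFun h ((posE hS y : ↥(Sᶜ)) : Fin (k*l))
  rw [psiF_posE, psiF_posE] at h1
  exact valE_inj h1

lemma psiF_swap (j₀ : Fin k) {S : Finset (Fin (k*l))} (hS : S.card = l)
    (h0S : (0:Fin (k*l)) ∉ S) (u : Fin ((k-1)*l) → Fin (k-1)) (h : Fin ((k-1)*l)) :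
    psiF j₀ hS (u ∘ Equiv.swap 0 h)
      = psiF j₀ hS u ∘ Equiv.swap 0 ((posE hS h : ↥(Sᶜ)) : Fin (k*l)) := by
  funext x
  set H : Fin (k*l) := ((posE hS h : ↥(Sᶜ)) : Fin (k*l)) with hH
  have hHS : H ∉ S := Finset.mem_compl.1 (posE hS h).2
  show psiF j₀ hS (u ∘ Equiv.swap 0 h) x = psiF j₀ hS u (Equiv.swap 0 H x)
  by_cases hxS : x ∈ S
  · have hx0 : x ≠ 0 := fun e => h0S (e ▸ hxS)
    have hxH : x ≠ H := fun e => hHS (e ▸ hxS)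
    rw [Equiv.swap_apply_of_ne_of_ne hx0 hxH, psiF_mem j₀ hS _ hxS, psiF_mem j₀ hS u hxS]
  rcases eq_or_ne x 0 with rfl | hx0
  · rw [Equiv.swap_apply_left, psiF_zero j₀ hS h0S, hH, psiF_posE]
    show ((valE j₀ ((u ∘ Equiv.swap 0 h) 0)) : Fin k) = _
    rw [Function.comp_apply, Equiv.swap_apply_left]
  rcases eq_or_ne x H with rfl | hxH
  · rw [Equiv.swap_apply_right, hH, psiF_posE, psiF_zero j₀ hS h0S]
    show ((valE j₀ ((u ∘ Equiv.swap 0 h) h)) : Fin k) = _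
    rw [Function.comp_apply, Equiv.swap_apply_right]
  · have hxc : x ∈ Sᶜ := Finset.mem_compl.2 hxS
    set y := (posE hS).symm ⟨x, hxc⟩ with hy
    have hxy : ((posE hS y : ↥(Sᶜ)) : Fin (k*l)) = x := by
      rw [hy, OrderIso.apply_symm_apply]
    have hy0 : y ≠ 0 := by
      intro e
      apply hx0
      rw [← hxy, e, posE_zero hS h0S]
    have hyh : y ≠ h := by
      intro e; apply hxH; rw [← hxy, e, hH]
    rw [Equiv.swap_apply_of_ne_of_ne hx0 hxH, ← hxy, psiF_posE, psiF_posE]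
    show ((valE j₀ ((u ∘ Equiv.swap 0 h) y)) : Fin k) = _
    rw [Function.comp_apply, Equiv.swap_apply_of_ne_of_ne hy0 hyh]

lemma psi_surj_raw (j₀ : Fin k) {S : Finset (Fin (k*l))} (hS : S.card = l)
    (a : LSetPerm k l) (ha2 : univ.filter (fun x => a.1 x = j₀) = S) :
    ∃ u : LSetPerm (k-1) l, psiF j₀ hS u.1 = a.1 := by
  have key : ∀ x : Fin (k*l), x ∈ S ↔ a.1 x = j₀ := by
    intro x; rw [← ha2]; simp
  have hval : ∀ y : Fin ((k-1)*l),
      a.1 ((posE hS y : ↥(Sᶜ)) : Fin (k*l)) ∈ ({j₀}ᶜ : Finset (Fin k)) := by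
    intro y
    have h1 : ((posE hS y : ↥(Sᶜ)) : Fin (k*l)) ∉ S := Finset.mem_compl.1 (posE hS y).2
    rw [Finset.mem_compl, Finset.mem_singleton]
    exact fun e => h1 ((key _).2 e)
  set uf : Fin ((k-1)*l) → Fin (k-1) :=
    fun y => (valE j₀).symm ⟨a.1 ((posE hS y : ↥(Sᶜ)) : Fin (k*l)), hval y⟩ with huf
  have hufc : ∀ j' : Fin (k-1), (univ.filter fun y => uf y = j').card = l := by
    intro j'
    have hiff : ∀ y, uf y = j' ↔
        a.1 ((posE hS y : ↥(Sᶜ)) : Fin (k*l)) = ((valE j₀ j') : Fin k) := by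
      intro y
      rw [show uf y = (valE j₀).symm ⟨a.1 ((posE hS y : ↥(Sᶜ)) : Fin (k*l)), hval y⟩ from rfl,
        OrderIso.symm_apply_eq, Subtype.ext_iff]
    have hp : ∀ x, a.1 x = ((valE j₀ j') : Fin k) → x ∈ Sᶜ := by
      intro x hx
      rw [Finset.mem_compl]
      intro hxS
      have h1 := (key x).1 hxS
      rw [hx] at h1
      exact valE_ne j₀ j' h1
    have h1 : (univ.filter fun y => uf y = j')
        = (univ.filter fun y =>
            a.1 (((posE hS).toEquiv y : ↥(Sᶜ)) : Fin (k*l)) = ((valE j₀ j') : Fin k)) := by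
      ext y
      simp only [mem_filter, mem_univ, true_and]
      exact hiff y
    rw [h1]
    exact (card_filter_transfer Sᶜ (posE hS).toEquiv
      (fun x => a.1 x = ((valE j₀ j') : Fin k)) hp).trans (a.2 _)
  refine ⟨⟨uf, hufc⟩, ?_⟩
  funext x
  by_cases hxS : x ∈ S
  · rw [psiF_mem j₀ hS _ hxS]
    exact ((key x).1 hxS).symm
  · rw [psiF_not_mem j₀ hS _ hxS]
    simp only [huf, OrderIso.apply_symm_apply]

end Psi

section Fiber

variable {k l : ℕ} [NeZero (k * l)] [NeZero ((k - 1) * l)]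
variable {i : Fin (k*l)}

def psiV (j₀ : Fin k) {S : Finset (Fin (k*l))} (hS : S.card = l) (hiS : i ∈ S)
    (h0S : (0:Fin (k*l)) ∉ S) (u : LSetPerm (k-1) l) : ↥(S0 k l i) :=
  ⟨psiP j₀ hS u, by
    show (psiP j₀ hS u).1 i ≠ (psiP j₀ hS u).1 0
    rw [show (psiP j₀ hS u).1 = psiF j₀ hS u.1 from rfl, psiF_mem j₀ hS u.1 hiS,
        psiF_zero j₀ hS h0S u.1]
    exact fun e => valE_ne j₀ (u.1 0) e.symm⟩

lemma psiV_apply (j₀ : Fin k) {S : Finset (Fin (k*l))} (hS : S.card = l) (hiS : i ∈ S)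
    (h0S : (0:Fin (k*l)) ∉ S) (u : LSetPerm (k-1) l) :
    (psiV j₀ hS hiS h0S u).1.1 = psiF j₀ hS u.1 := rfl

lemma idx_eq_iff (a : ↥(S0 k l i)) (σ : Idx k l i) :
    idx a = σ ↔ a.1.1 i = σ.1 ∧
      Finset.univ.filter (fun x => a.1.1 x = a.1.1 i) = σ.2.1 := by
  unfold idx
  exact Prod.ext_iff.trans (and_congr Iff.rfl Subtype.ext_iff)

lemma idx_psiV (j₀ : Fin k) {S : Finset (Fin (k*l))} (hS : S.card = l) (hiS : i ∈ S)
    (h0S : (0:Fin (k*l)) ∉ S) (u : LSetPerm (k-1) l) :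
    idx (psiV j₀ hS hiS h0S u) = (j₀, ⟨S, hS, hiS, h0S⟩) := by
  have hfst : (psiV j₀ hS hiS h0S u).1.1 i = j₀ := psiF_mem j₀ hS u.1 hiS
  apply (idx_eq_iff _ _).2
  refine ⟨hfst, ?_⟩
  have h1 : Finset.univ.filter (fun x => (psiV j₀ hS hiS h0S u).1.1 x
        = (psiV j₀ hS hiS h0S u).1.1 i)
      = Finset.univ.filter (fun x => psiF j₀ hS u.1 x = j₀) := by
    apply Finset.filter_congr
    intro x _
    rw [psiV_apply, psiF_mem j₀ hS u.1 hiS]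
  rw [h1, psiF_filter_j0]

lemma psiV_adj (hi : i ≠ 0) (j₀ : Fin k) {S : Finset (Fin (k*l))} (hS : S.card = l)
    (hiS : i ∈ S) (h0S : (0:Fin (k*l)) ∉ S) {u u' : LSetPerm (k-1) l}
    (h : Fin ((k-1)*l)) (h0 : h ≠ 0)
    (hne : u.1 h ≠ u.1 0) (hw : u'.1 = u.1 ∘ Equiv.swap 0 h) :
    (Gr k l i).Adj (psiV j₀ hS hiS h0S u) (psiV j₀ hS hiS h0S u') := by
  rw [Gr_adj_iff hi]
  set H : Fin (k*l) := ((posE hS h : ↥(Sᶜ)) : Fin (k*l)) with hH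
  have hHS : H ∉ S := Finset.mem_compl.1 (posE hS h).2
  refine ⟨H, ?_, ?_, ?_, ?_⟩
  · intro e
    apply h0
    apply (posE hS).injective
    rw [posE_zero hS h0S]
    exact Subtype.ext e
  · exact fun e => hHS (e ▸ hiS)
  · rw [psiV_apply, hH, psiF_posE, psiF_zero j₀ hS h0S]
    intro e
    exact hne (valE_inj e)
  · rw [psiV_apply, psiV_apply, hw, psiF_swap j₀ hS h0S]

def psiHom (hi : i ≠ 0) (j₀ : Fin k) {S : Finset (Fin (k*l))} (hS : S.card = l)
    (hiS : i ∈ S) (h0S : (0:Fin (k*l)) ∉ S) : STGraph (k-1) l →g Gr k l i where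
  toFun := psiV j₀ hS hiS h0S
  map_rel' := by
    intro u u' ha
    rw [STGraph_adj_iff] at ha
    obtain ⟨h, h0, hne, hw⟩ := ha
    exact psiV_adj hi j₀ hS hiS h0S h h0 hne hw

lemma adj_psiV_rev (hi : i ≠ 0) (j₀ : Fin k) {S : Finset (Fin (k*l))} (hS : S.card = l)
    (hiS : i ∈ S) (h0S : (0:Fin (k*l)) ∉ S) {u u' : LSetPerm (k-1) l}
    (hadj : (Gr k l i).Adj (psiV j₀ hS hiS h0S u) (psiV j₀ hS hiS h0S u')) :
    (STGraph (k-1) l).Adj u u' := by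
  obtain ⟨H, H0, Hi, hne, hw⟩ := (Gr_adj_iff hi).1 hadj
  have hHS : H ∉ S := by
    intro hmem
    have h1 : (psiV j₀ hS hiS h0S u).1.1 H = j₀ := psiF_mem j₀ hS u.1 hmem
    have h2 : (psiV j₀ hS hiS h0S u').1.1 0 = j₀ := by
      rw [hw]
      show (psiV j₀ hS hiS h0S u).1.1 (Equiv.swap 0 H 0) = j₀
      rw [Equiv.swap_apply_left]
      exact h1
    have h3 : (psiV j₀ hS hiS h0S u').1.1 i = j₀ := psiF_mem j₀ hS u'.1 hiS
    exact mem_S0 (psiV j₀ hS hiS h0S u') (h3.trans h2.symm)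
  set h : Fin ((k-1)*l) := (posE hS).symm ⟨H, Finset.mem_compl.2 hHS⟩ with hh
  have hHh : ((posE hS h : ↥(Sᶜ)) : Fin (k*l)) = H := by
    rw [hh, OrderIso.apply_symm_apply]
  have hh0 : h ≠ 0 := by
    intro e; apply H0; rw [← hHh, e, posE_zero hS h0S]
  rw [STGraph_adj_iff]
  refine ⟨h, hh0, ?_, ?_⟩
  · intro e
    apply hne
    rw [psiV_apply, ← hHh, psiF_posE, psiF_zero j₀ hS h0S, e]
  · apply psiF_inj j₀ hS
    rw [psiF_swap j₀ hS h0S, hHh]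
    exact hw

lemma psiV_inj (j₀ : Fin k) {S : Finset (Fin (k*l))} (hS : S.card = l) (hiS : i ∈ S)
    (h0S : (0:Fin (k*l)) ∉ S) {u u' : LSetPerm (k-1) l}
    (h : psiV j₀ hS hiS h0S u = psiV j₀ hS hiS h0S u') : u = u' := by
  apply Subtype.ext
  apply psiF_inj j₀ hS
  have := congrArg (fun z => z.1.1) h
  exact this

lemma psiV_surj (j₀ : Fin k) {S : Finset (Fin (k*l))} (hS : S.card = l) (hiS : i ∈ S)
    (h0S : (0:Fin (k*l)) ∉ S) (a : ↥(S0 k l i)) (ha : idx a = (j₀, ⟨S, hS, hiS, h0S⟩)) :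
    ∃ u : LSetPerm (k-1) l, psiV j₀ hS hiS h0S u = a := by
  replace ha := (idx_eq_iff _ _).1 ha
  obtain ⟨ha1, ha2⟩ := ha
  have ha1' : a.1.1 i = j₀ := ha1
  have ha2'' : Finset.univ.filter (fun x => a.1.1 x = a.1.1 i) = S := ha2
  have ha2' : Finset.univ.filter (fun x => a.1.1 x = j₀) = S := by
    rw [← ha2'']
    apply Finset.filter_congr
    intro x _
    rw [ha1']
  obtain ⟨u, hu⟩ := psi_surj_raw j₀ hS a.1 ha2'
  exact ⟨u, Subtype.ext (Subtype.ext hu)⟩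

lemma fiber_reachable (hi : i ≠ 0) {a b : ↥(S0 k l i)} (hab : idx a = idx b) :
    (Gr k l i).Reachable a b := by
  obtain ⟨j₀, S, hS, hiS, h0S, hrep⟩ :
      ∃ j₀ S hS hiS h0S, idx a = (j₀, ⟨S, hS, hiS, h0S⟩) :=
    ⟨(idx a).1, (idx a).2.1, (idx a).2.2.1, (idx a).2.2.2.1, (idx a).2.2.2.2, rfl⟩
  have hrepb : idx b = (j₀, ⟨S, hS, hiS, h0S⟩) := by rw [← hab]; exact hrep
  obtain ⟨u, hu⟩ := psiV_surj j₀ hS hiS h0S a hrep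
  obtain ⟨u', hu'⟩ := psiV_surj j₀ hS hiS h0S b hrepb
  have hr : (STGraph (k-1) l).Reachable u u' := STGraph_preconnected u u'
  have h1 := SimpleGraph.Reachable.map (psiHom hi j₀ hS hiS h0S) hr
  have h2 : (Gr k l i).Reachable (psiV j₀ hS hiS h0S u) (psiV j₀ hS hiS h0S u') := h1
  rw [hu, hu'] at h2
  exact h2

end Fiber

section Assembly

variable {k l : ℕ} [NeZero (k * l)] [NeZero ((k - 1) * l)]
variable {i : Fin (k*l)}

def idxC (hi : i ≠ 0) : (Gr k l i).ConnectedComponent → Idx k l i :=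
  SimpleGraph.ConnectedComponent.lift idx (fun _ _ p _ => (idx_reachable hi ⟨p⟩).symm)

noncomputable def compEquiv (hi : i ≠ 0) : (Gr k l i).ConnectedComponent ≃ Idx k l i where
  toFun := idxC hi
  invFun σ := (Gr k l i).connectedComponentMk
    (psiV σ.1 σ.2.2.1 σ.2.2.2.1 σ.2.2.2.2 (canonPerm (k-1) l))
  left_inv := by
    intro c
    induction c using SimpleGraph.ConnectedComponent.ind with
    | _ v =>
      have h1 : idxC hi ((Gr k l i).connectedComponentMk v) = idx v := rfl
      rw [h1, SimpleGraph.ConnectedComponent.eq]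
      apply fiber_reachable hi
      rw [idx_psiV]
      rfl
  right_inv := by
    intro σ
    have h1 : idxC hi ((Gr k l i).connectedComponentMk
        (psiV σ.1 σ.2.2.1 σ.2.2.2.1 σ.2.2.2.2 (canonPerm (k-1) l)))
        = idx (psiV σ.1 σ.2.2.1 σ.2.2.2.1 σ.2.2.2.2 (canonPerm (k-1) l)) := rfl
    rw [h1, idx_psiV]
    rfl

lemma Idx_card (hi : i ≠ 0) (hl : 1 ≤ l) :
    Nat.card (Idx k l i) = k * Nat.choose (k*l - 2) (l - 1) := by
  have h0i : (0 : Fin (k*l)) ∉ ({i} : Finset (Fin (k*l))) := by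
    rw [Finset.mem_singleton]; exact fun e => hi e.symm
  set s : Finset (Fin (k*l)) := univ \ {0, i} with hs
  have hinotin : ∀ T : Finset (Fin (k*l)), T ⊆ s → i ∉ T ∧ (0:Fin (k*l)) ∉ T := by
    intro T hT
    constructor
    · intro hiT
      have h2 := hT hiT
      rw [hs, Finset.mem_sdiff] at h2
      exact h2.2 (by simp)
    · intro h0T
      have h2 := hT h0T
      rw [hs, Finset.mem_sdiff] at h2
      exact h2.2 (by simp)
  have toMem : ∀ S : {S : Finset (Fin (k*l)) // S.card = l ∧ i ∈ S ∧ (0:Fin (k*l)) ∉ S},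
      S.1.erase i ∈ s.powersetCard (l-1) := by
    intro S
    rw [Finset.mem_powersetCard]
    constructor
    · intro x hx
      rw [Finset.mem_erase] at hx
      rw [hs, Finset.mem_sdiff]
      refine ⟨Finset.mem_univ x, ?_⟩
      intro hmem
      rcases Finset.mem_insert.1 hmem with rfl | hx2
      · exact S.2.2.2 hx.2
      · exact hx.1 (Finset.mem_singleton.1 hx2)
    · rw [Finset.card_erase_of_mem S.2.2.1, S.2.1]
  have invMem : ∀ T : ↥(s.powersetCard (l-1)),
      (insert i T.1).card = l ∧ i ∈ insert i T.1 ∧ (0:Fin (k*l)) ∉ insert i T.1 := by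
    intro T
    obtain ⟨hsub, hcard⟩ := Finset.mem_powersetCard.1 T.2
    obtain ⟨hiT, h0T⟩ := hinotin T.1 hsub
    refine ⟨?_, Finset.mem_insert_self i T.1, ?_⟩
    · rw [Finset.card_insert_of_notMem hiT, hcard]; omega
    · intro hmem
      rcases Finset.mem_insert.1 hmem with e | h0T2
      · exact hi e.symm
      · exact h0T h0T2
  have e2 : {S : Finset (Fin (k*l)) // S.card = l ∧ i ∈ S ∧ (0:Fin (k*l)) ∉ S}
      ≃ ↥(s.powersetCard (l-1)) :=
    ⟨fun S => ⟨S.1.erase i, toMem S⟩,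
     fun T => ⟨insert i T.1, invMem T⟩,
     fun S => Subtype.ext (Finset.insert_erase S.2.2.1),
     fun T => Subtype.ext (Finset.erase_insert
       (hinotin T.1 (Finset.mem_powersetCard.1 T.2).1).1)⟩
  have hscard : s.card = k*l - 2 := by
    rw [hs, Finset.card_sdiff_of_subset (Finset.subset_univ _), Finset.card_univ, Fintype.card_fin]
    congr 1
    rw [Finset.card_insert_of_notMem h0i, Finset.card_singleton]
  calc Nat.card (Idx k l i)
      = Nat.card (Fin k) *
        Nat.card {S : Finset (Fin (k*l)) // S.card = l ∧ i ∈ S ∧ (0:Fin (k*l)) ∉ S} :=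
        Nat.card_prod _ _
    _ = k * (s.powersetCard (l-1)).card := by
        rw [Nat.card_eq_fintype_card, Fintype.card_fin]
        congr 1
        rw [Nat.card_congr e2, Nat.card_eq_fintype_card, Fintype.card_coe]
    _ = k * Nat.choose (k*l-2) (l-1) := by rw [Finset.card_powersetCard, hscard]

lemma supp_eq (hi : i ≠ 0) (v : ↥(S0 k l i)) :
    ((Gr k l i).connectedComponentMk v).supp = {b | idx b = idx v} := by
  ext b
  rw [SimpleGraph.ConnectedComponent.mem_supp_iff, SimpleGraph.ConnectedComponent.eq]
  exact ⟨fun h => idx_reachable hi h.symm, fun h => (fiber_reachable hi h.symm).symm⟩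

lemma fiber_iso_nonempty (hi : i ≠ 0) (c : (Gr k l i).ConnectedComponent) :
    Nonempty ((Gr k l i).induce c.supp ≃g STGraph (k-1) l) := by
  induction c using SimpleGraph.ConnectedComponent.ind with
  | _ v =>
    obtain ⟨j₀, S, hS, hiS, h0S, hrep⟩ :
        ∃ j₀ S hS hiS h0S, idx v = (j₀, ⟨S, hS, hiS, h0S⟩) :=
      ⟨(idx v).1, (idx v).2.1, (idx v).2.2.1, (idx v).2.2.2.1, (idx v).2.2.2.2, rfl⟩
    have hmem : ∀ u : LSetPerm (k-1) l,
        psiV j₀ hS hiS h0S u ∈ ((Gr k l i).connectedComponentMk v).supp := by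
      intro u
      rw [supp_eq hi]
      show idx (psiV j₀ hS hiS h0S u) = idx v
      rw [idx_psiV, hrep]
    set f : LSetPerm (k-1) l → ↥(((Gr k l i).connectedComponentMk v).supp) :=
      fun u => ⟨psiV j₀ hS hiS h0S u, hmem u⟩ with hf
    have hbij : Function.Bijective f := by
      constructor
      · intro u u' h
        exact psiV_inj j₀ hS hiS h0S (congrArg Subtype.val h)
      · intro b
        have hb : idx b.1 = (j₀, ⟨S, hS, hiS, h0S⟩) := by
          have h2 := (Set.ext_iff.1 (supp_eq hi v) b.1).1 b.2
          exact (show idx b.1 = idx v from h2).trans hrep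
        obtain ⟨u, hu⟩ := psiV_surj j₀ hS hiS h0S b.1 hb
        exact ⟨u, Subtype.ext hu⟩
    refine ⟨SimpleGraph.Iso.symm ⟨Equiv.ofBijective f hbij, ?_⟩⟩
    intro u u'
    have hadj : ((Gr k l i).induce ((Gr k l i).connectedComponentMk v).supp).Adj
        (f u) (f u') ↔ (Gr k l i).Adj (psiV j₀ hS hiS h0S u) (psiV j₀ hS hiS h0S u') := by
      rw [SimpleGraph.induce]
      exact SimpleGraph.comap_adj
    have hiff : (Gr k l i).Adj (psiV j₀ hS hiS h0S u) (psiV j₀ hS hiS h0S u') ↔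
        (STGraph (k-1) l).Adj u u' := by
      constructor
      · exact adj_psiV_rev hi j₀ hS hiS h0S
      · intro ha
        rw [STGraph_adj_iff] at ha
        obtain ⟨h, h0, hne, hw⟩ := ha
        exact psiV_adj hi j₀ hS hiS h0S h h0 hne hw
    exact hadj.trans hiff

lemma main_result (k l : ℕ) [NeZero (k*l)] [NeZero ((k-1)*l)] (hl : 2 ≤ l)
    (i : Fin (k*l)) (hi : i ≠ 0) :
    Nat.card (Gr k l i).ConnectedComponent = k * Nat.choose (k*l - 2) (l-1) ∧
    ∀ c : (Gr k l i).ConnectedComponent,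
      Nonempty ((Gr k l i).induce c.supp ≃g STGraph (k-1) l) := by
  constructor
  · rw [Nat.card_congr (compEquiv hi)]
    exact Idx_card hi (by omega)
  · exact fun c => fiber_iso_nonempty hi c

end Assembly
end ST15

/-- for `ℓ ≥ 2`, `k ≥ 3` and a position `i ≠ 0`, the graph obtained
from `ST^ℓ_k` by deleting the vertices of `Σ_i` and the edges of `E_i` has exactly
`k · C(kℓ-2, ℓ-1)` connected components, each a copy of `ST^ℓ_{k-1}`. -/
theorem ST_delete_components_count (k l : ℕ) (hl : 2 ≤ l) (hk : 3 ≤ k) :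
    letI : NeZero (k * l) := ⟨Nat.mul_ne_zero (by omega) (by omega)⟩
    letI : NeZero ((k - 1) * l) := ⟨Nat.mul_ne_zero (by omega) (by omega)⟩
    ∀ i : Fin (k * l), i ≠ 0 →
      let E : Set (Sym2 (LSetPerm k l)) :=
        {e | ∃ v w : LSetPerm k l, e = s(v, w) ∧ v.1 i ≠ v.1 0 ∧
          w.1 = v.1 ∘ Equiv.swap 0 i}
      let G := ((STGraph k l).deleteEdges E).induce {v : LSetPerm k l | v.1 i ≠ v.1 0}
      Nat.card G.ConnectedComponent = k * Nat.choose (k * l - 2) (l - 1) ∧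
      ∀ c : G.ConnectedComponent, Nonempty (G.induce c.supp ≃g STGraph (k - 1) l) := by
  haveI : NeZero (k * l) := ⟨Nat.mul_ne_zero (by omega) (by omega)⟩
  haveI : NeZero ((k - 1) * l) := ⟨Nat.mul_ne_zero (by omega) (by omega)⟩
  intro i hi E G
  exact ST15.main_result k l hl i hi
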